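/- A real tensor Q of size n×n×n3 satisfies Q^* ∗ Q = I (the n×n×n3 identity tensor) if and only if for every k = 1,…,n3 the frontal slice Q̂^{(k)} of the DFT of Q along the third dimension is a unitary n×n complex matrix. -/

import Mathlib

open Matrix BigOperators Finset Kronecker

noncomputable section

/-- The DFT of a complex third-order tensor (given by its frontal slices) along the
third dimension: `Â⁽ᵏ⁾ = Σₜ ω^(k·t) A⁽ᵗ⁾` with `ω = exp(-2πi/n3)` (0-based indices). -/
def cdft {n1 n2 n3 : ℕ} (A : Fin n3 → Matrix (Fin n1) (Fin n2) ℂ) :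
    Fin n3 → Matrix (Fin n1) (Fin n2) ℂ :=
  fun k => ∑ t : Fin n3,
    (Complex.exp (-(2 * Real.pi * Complex.I) / (n3 : ℂ))) ^ ((k : ℕ) * (t : ℕ)) • A t

/-- The DFT along the third dimension of a real third-order tensor. -/
def rdft {n1 n2 n3 : ℕ} (A : Fin n3 → Matrix (Fin n1) (Fin n2) ℝ) :
    Fin n3 → Matrix (Fin n1) (Fin n2) ℂ :=
  cdft (fun t => (A t).map (fun x => (x : ℂ)))

/-- The block circulant matrix of a third-order tensor: the (k,l) block is the
frontal slice `A⁽ᵏ⁻ˡ mod n3⁾` (0-based). -/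
def bcirc {α : Type*} {n1 n2 n3 : ℕ} (A : Fin n3 → Matrix (Fin n1) (Fin n2) α) :
    Matrix (Fin n3 × Fin n1) (Fin n3 × Fin n2) α :=
  Matrix.of fun p q => A (p.1 - q.1) p.2 q.2

/-- The block diagonal matrix whose diagonal blocks are the frontal slices. -/
def bdiag {α : Type*} [Zero α] {n1 n2 n3 : ℕ} (A : Fin n3 → Matrix (Fin n1) (Fin n2) α) :
    Matrix (Fin n3 × Fin n1) (Fin n3 × Fin n2) α :=
  Matrix.of fun p q => if p.1 = q.1 then A p.1 p.2 q.2 else 0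

/-- `unfold` stacks the frontal slices vertically. -/
def unfoldT {α : Type*} {n1 l n3 : ℕ} (B : Fin n3 → Matrix (Fin n1) (Fin l) α) :
    Matrix (Fin n3 × Fin n1) (Fin l) α :=
  Matrix.of fun p j => B p.1 p.2 j

/-- The t-product `A ∗ B`, determined by `unfold (A ∗ B) = bcirc A * unfold B`. -/
def tprodT {n1 n2 l n3 : ℕ} (A : Fin n3 → Matrix (Fin n1) (Fin n2) ℝ)
    (B : Fin n3 → Matrix (Fin n2) (Fin l) ℝ) : Fin n3 → Matrix (Fin n1) (Fin l) ℝ :=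
  fun k => Matrix.of fun i j => (bcirc A * unfoldT B) (k, i) j

/-- Conjugate transpose of a real tensor: transpose each frontal slice and reverse
the order of the transposed slices 2 through n3 (0-based: slice k ↦ (A(-k))ᵀ). -/
def ctransT {n1 n2 n3 : ℕ} (A : Fin n3 → Matrix (Fin n1) (Fin n2) ℝ) :
    Fin n3 → Matrix (Fin n2) (Fin n1) ℝ :=
  fun k => (A (-k))ᵀ

/-- The identity tensor: identity matrix as first frontal slice, zeros elsewhere. -/
def idT (q n3 : ℕ) [NeZero n3] : Fin n3 → Matrix (Fin q) (Fin q) ℝ :=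
  fun k => if k = 0 then (1 : Matrix (Fin q) (Fin q) ℝ) else 0

/-- The Frobenius norm of a real third-order tensor. -/
def frobT {n1 n2 n3 : ℕ} (A : Fin n3 → Matrix (Fin n1) (Fin n2) ℝ) : ℝ :=
  Real.sqrt (∑ k, ∑ i, ∑ j, (A k i j) ^ 2)

/-- The nuclear norm of a complex matrix: the sum of the square roots of the
eigenvalues of `Mᴴ * M` (i.e. the sum of the singular values). -/
def nuclearNorm {m n : ℕ} (M : Matrix (Fin m) (Fin n) ℂ) : ℝ :=
  ∑ i, Real.sqrt ((Matrix.isHermitian_conjTranspose_mul_self M).eigenvalues i)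

/-- The tensor nuclear norm: `(1/n3) Σₖ ‖Â⁽ᵏ⁾‖₊`. -/
def tnn {n1 n2 n3 : ℕ} (D : Fin n3 → Matrix (Fin n1) (Fin n2) ℝ) : ℝ :=
  (1 / (n3 : ℝ)) * ∑ k, nuclearNorm (rdft D k)

/-- The tensor L_{2,1}-norm: `Σⱼ √(Σᵢ Σₖ D i j k ²)`. -/
def l21 {n1 n2 n3 : ℕ} (D : Fin n3 → Matrix (Fin n1) (Fin n2) ℝ) : ℝ :=
  ∑ j : Fin n2, Real.sqrt (∑ i : Fin n1, ∑ k : Fin n3, (D k i j) ^ 2)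

/-- The n×n DFT matrix with (p,q)-entry `ω^(p·q)`, `ω = exp(-2πi/n)` (0-based). -/
def dftMatrix (n : ℕ) : Matrix (Fin n) (Fin n) ℂ :=
  Matrix.of fun p q =>
    (Complex.exp (-(2 * Real.pi * Complex.I) / (n : ℂ))) ^ ((p : ℕ) * (q : ℕ))

/-- A tensor `Q` is orthogonal if `Q* ∗ Q = Q ∗ Q* = I`. -/
def isOrthogonalT {n n3 : ℕ} [NeZero n3] (Q : Fin n3 → Matrix (Fin n) (Fin n) ℝ) : Prop :=
  tprodT (ctransT Q) Q = idT n n3 ∧ tprodT Q (ctransT Q) = idT n n3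

/-!
The DFT along the third dimension block-diagonalises `bcirc`: it turns the t-product into the
slicewise matrix product (the convolution theorem for the cyclic group `Fin n3`), the tensor
conjugate transpose into the slicewise conjugate transpose, and the identity tensor into identity
slices. Fourier inversion, from the orthogonality of the characters `a ↦ ωᵃ`, makes the DFT
injective, so `Q* ∗ Q = I` holds iff `Q̂⁽ᵏ⁾ᴴ Q̂⁽ᵏ⁾ = 1` for every `k`.
-/

theorem isPrimitiveRoot_exp_neg_two_pi_I_div (n : ℕ) [NeZero n] :
    IsPrimitiveRoot (Complex.exp (-(2 * Real.pi * Complex.I) / n)) n := by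
  rw [neg_div, Complex.exp_neg]
  exact (Complex.isPrimitiveRoot_exp n (NeZero.ne n)).inv

def dftChar (n : ℕ) [NeZero n] : AddChar (Fin n) ℂ where
  toFun a := Complex.exp (-(2 * Real.pi * Complex.I) / n) ^ (a : ℕ)
  map_zero_eq_one' := by simp
  map_add_eq_mul' a b := by
    rw [Fin.val_add, ← pow_eq_pow_mod _ (isPrimitiveRoot_exp_neg_two_pi_I_div n).pow_eq_one,
      pow_add]

section dftChar

variable {n : ℕ} [NeZero n]

theorem dftChar_mul (a b : Fin n) :
    dftChar n (a * b) = Complex.exp (-(2 * Real.pi * Complex.I) / n) ^ ((a : ℕ) * (b : ℕ)) := by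
  rw [pow_eq_pow_mod _ (isPrimitiveRoot_exp_neg_two_pi_I_div n).pow_eq_one, ← Fin.val_mul]
  rfl

open Fin.CommRing in
theorem isPrimitive_dftChar : (dftChar n).IsPrimitive := by
  intro a ha h
  have h1 := DFunLike.congr_fun h 1
  rw [AddChar.mulShift_apply, mul_one, AddChar.one_apply] at h1
  exact (isPrimitiveRoot_exp_neg_two_pi_I_div n).pow_ne_one_of_pos_of_lt
    (Fin.val_ne_zero_iff.mpr ha) a.is_lt h1

open Fin.CommRing in
theorem sum_dftChar_mul (a : Fin n) :
    ∑ k : Fin n, dftChar n (k * a) = if a = 0 then (n : ℂ) else 0 := by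
  rw [AddChar.sum_mulShift a isPrimitive_dftChar, Fintype.card_fin, Nat.cast_ite, Nat.cast_zero]

end dftChar

section cdft

variable {n1 n2 l n3 : ℕ} [NeZero n3]

theorem cdft_eq_sum_dftChar (A : Fin n3 → Matrix (Fin n1) (Fin n2) ℂ) (k : Fin n3) :
    cdft A k = ∑ t, dftChar n3 (k * t) • A t := by
  simp only [cdft, dftChar_mul]

theorem sum_dftChar_neg_smul_cdft (A : Fin n3 → Matrix (Fin n1) (Fin n2) ℂ) (s : Fin n3) :
    ∑ k, dftChar n3 (-(k * s)) • cdft A k = (n3 : ℂ) • A s := by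
  have hexp (k t : Fin n3) : -(k * s) + k * t = k * (t - s) := by
    rw [mul_sub]
    abel
  simp only [cdft_eq_sum_dftChar, Finset.smul_sum, smul_smul, ← AddChar.map_add_eq_mul, hexp]
  rw [Finset.sum_comm]
  simp only [← Finset.sum_smul, sum_dftChar_mul, sub_eq_zero, ite_smul, zero_smul,
    Finset.sum_ite_eq', Finset.mem_univ, if_true]

theorem cdft_injective : Function.Injective (cdft (n1 := n1) (n2 := n2) (n3 := n3)) := by
  intro A B h
  funext s
  have hs := sum_dftChar_neg_smul_cdft A s
  rw [h, sum_dftChar_neg_smul_cdft] at hs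
  exact smul_right_injective _ (Nat.cast_ne_zero.2 (NeZero.ne n3)) hs.symm

theorem cdft_conv (A : Fin n3 → Matrix (Fin n1) (Fin n2) ℂ)
    (B : Fin n3 → Matrix (Fin n2) (Fin l) ℂ) (k : Fin n3) :
    cdft (fun s => ∑ t, A (s - t) * B t) k = cdft A k * cdft B k := by
  simp only [cdft_eq_sum_dftChar, Matrix.sum_mul, Matrix.mul_sum, Finset.smul_sum,
    Matrix.smul_mul, Matrix.mul_smul, smul_smul]
  rw [Finset.sum_comm]
  refine Finset.sum_congr rfl fun t _ => ?_
  rw [← Equiv.sum_comp (Equiv.addRight t)]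
  simp [mul_add, AddChar.map_add_eq_mul, mul_comm]

theorem cdft_conjTranspose_neg (A : Fin n3 → Matrix (Fin n1) (Fin n2) ℂ) (k : Fin n3) :
    cdft (fun t => (A (-t))ᴴ) k = (cdft A k)ᴴ := by
  simp only [cdft_eq_sum_dftChar, conjTranspose_sum, conjTranspose_smul]
  rw [← Equiv.sum_comp (Equiv.neg (Fin n3))]
  simp [mul_neg, AddChar.map_neg_eq_conj]

theorem cdft_single_zero (M : Matrix (Fin n1) (Fin n2) ℂ) (k : Fin n3) :
    cdft (Pi.single 0 M) k = M := by
  simp [cdft_eq_sum_dftChar, Pi.single_apply]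

end cdft

section rdft

variable {n1 n2 l n3 : ℕ}

theorem tprodT_apply (A : Fin n3 → Matrix (Fin n1) (Fin n2) ℝ)
    (B : Fin n3 → Matrix (Fin n2) (Fin l) ℝ) (k : Fin n3) :
    tprodT A B k = ∑ t, A (k - t) * B t := by
  ext i j
  simp only [tprodT, bcirc, unfoldT, of_apply, mul_apply, Matrix.sum_apply, Fintype.sum_prod_type]

variable [NeZero n3]

theorem rdft_injective : Function.Injective (rdft (n1 := n1) (n2 := n2) (n3 := n3)) :=
  fun _ _ h => funext fun t =>
    Matrix.map_injective Complex.ofReal_injective (congrFun (cdft_injective h) t)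

theorem rdft_tprodT (A : Fin n3 → Matrix (Fin n1) (Fin n2) ℝ)
    (B : Fin n3 → Matrix (Fin n2) (Fin l) ℝ) (k : Fin n3) :
    rdft (tprodT A B) k = rdft A k * rdft B k := by
  rw [rdft, rdft, rdft, ← cdft_conv]
  congr 1
  funext s
  ext i j
  simp [tprodT_apply, mul_apply, Matrix.sum_apply]

theorem rdft_ctransT (A : Fin n3 → Matrix (Fin n1) (Fin n2) ℝ) (k : Fin n3) :
    rdft (ctransT A) k = (rdft A k)ᴴ := by
  rw [rdft, rdft, ← cdft_conjTranspose_neg]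
  congr 1
  funext t
  ext i j
  simp [ctransT]

theorem rdft_idT (q : ℕ) (k : Fin n3) : rdft (idT q n3) k = 1 := by
  rw [rdft, ← cdft_single_zero (1 : Matrix (Fin q) (Fin q) ℂ) k]
  congr 1
  funext t
  by_cases ht : t = 0 <;> simp [idT, ht]

end rdft

/-- `Q* ∗ Q = I` iff every frontal slice of the DFT of Q is unitary. -/
theorem orthogonal_iff_dft_slices_unitary (n n3 : ℕ) [NeZero n3]
    (Q : Fin n3 → Matrix (Fin n) (Fin n) ℝ) :
    tprodT (ctransT Q) Q = idT n n3 ↔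
      ∀ k, rdft Q k ∈ Matrix.unitaryGroup (Fin n) ℂ := by
  rw [← rdft_injective.eq_iff, funext_iff]
  refine forall_congr' fun k => ?_
  rw [rdft_tprodT, rdft_ctransT, rdft_idT, Matrix.mem_unitaryGroup_iff', star_eq_conjTranspose]
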